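/- arXiv:1405.5352 — 7 statements merged into one kernel-verified Lean document; each statement's English description precedes it below -/
import Mathlib

section
/- Let H be a characteristic subgroup of an abstract group G. Suppose that H possesses a finite normal subgroup N such that H/N is cyclic. Then G has a characteristic subgroup M contained in H such that the order of M is at most |N|² and H/M is cyclic. -/
open Subgroup

/-- If a subgroup `M₀` of a characteristic subgroup `H` is defined by a predicate preserved by
all automorphisms of `G`, then its image in `G` is characteristic. -/
private lemma aux_char {G : Type} [Group G] (H : Subgroup G) [H.Characteristic]
    (M₀ : Subgroup ↥H) (P : G → Prop)
    (hP : ∀ φ : G ≃* G, ∀ g, P g → P (φ g))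
    (hmem : ∀ h : ↥H, h ∈ M₀ ↔ P ↑h) :
    (M₀.map H.subtype).Characteristic := by
  have hm : ∀ g, g ∈ M₀.map H.subtype ↔ g ∈ H ∧ P g := by
    intro g
    constructor
    · rintro ⟨h, hh, rfl⟩
      exact ⟨h.2, (hmem h).mp hh⟩
    · rintro ⟨hgH, hPg⟩
      exact ⟨⟨g, hgH⟩, (hmem _).mpr hPg, rfl⟩
  rw [Subgroup.characteristic_iff_comap_eq]
  intro φ
  have hH : ∀ g : G, φ g ∈ H ↔ g ∈ H := by
    intro g
    have hc := Subgroup.characteristic_iff_comap_eq.mp (inferInstance : H.Characteristic) φ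
    conv_rhs => rw [← hc]
    rfl
  ext g
  simp only [Subgroup.mem_comap, hm, MulEquiv.coe_toMonoidHom]
  constructor
  · rintro ⟨h1, h2⟩
    refine ⟨(hH g).mp h1, ?_⟩
    have := hP φ.symm _ h2
    simpa using this
  · rintro ⟨h1, h2⟩
    exact ⟨(hH g).mpr h1, hP φ g h2⟩

/-- **Lemma 2.2 (abstract case).** Let `H` be a characteristic subgroup of a group `G` and
suppose `H` has a finite normal subgroup `N` with `H/N` cyclic. Then `G` has a characteristic
subgroup `M ≤ H` of order at most `|N|²` with `H/M` cyclic. -/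
theorem characteristic_finite_by_cyclic
    (G : Type) [Group G] (H : Subgroup G) (hchar : H.Characteristic)
    (N : Subgroup ↥H) [N.Normal] (hNfin : Finite N) (hcyc : IsCyclic (↥H ⧸ N)) :
    ∃ M : Subgroup G, ∃ _ : M.Characteristic,
      M ≤ H ∧ Nat.card M ≤ (Nat.card N) ^ 2 ∧ IsCyclic (↥H ⧸ M.subgroupOf H) := by
  classical
  haveI := hchar
  haveI := hcyc
  set n := Nat.card N with hn
  have hn0 : 0 < n := Nat.card_pos
  have hNpow : ∀ h : ↥H, h ∈ N → h ^ n = 1 := by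
    intro h hh
    have h1 : (⟨h, hh⟩ : N) ^ n = 1 := pow_card_eq_one'
    have := congrArg (N.subtype) h1
    simpa using this
  by_cases hfin : Finite (↥H ⧸ N)
  · -- finite case
    haveI : Finite ↥H :=
      Finite.of_equiv _ (Subgroup.groupEquivQuotientProdSubgroup (s := N)).symm
    -- the commutator is contained in N
    have hcomm : commutator ↥H ≤ N := by
      letI := hcyc.commGroup
      exact (Abelianization.commutator_subset_ker (QuotientGroup.mk' N)).trans
        (le_of_eq (QuotientGroup.ker_mk' N))
    set M₀ : Subgroup ↥H :=
      ((powMonoidHom n : Abelianization ↥H →* Abelianization ↥H).ker).comap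
        Abelianization.of with hM₀def
    have memM₀ : ∀ h : ↥H, h ∈ M₀ ↔ h ^ n ∈ commutator ↥H := by
      intro h
      rw [hM₀def, Subgroup.mem_comap, MonoidHom.mem_ker, powMonoidHom_apply,
        ← map_pow]
      exact QuotientGroup.eq_one_iff _
    haveI : M₀.Normal := Subgroup.normal_comap _
    have hNle : N ≤ M₀ := by
      intro h hh
      rw [memM₀, hNpow h hh]
      exact one_mem _
    -- cyclicity of the quotient
    have hcyc2 : IsCyclic (↥H ⧸ M₀) := by
      apply isCyclic_of_surjective
        (QuotientGroup.map N M₀ (MonoidHom.id _) (by simpa using hNle))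
      intro x
      obtain ⟨h, rfl⟩ := QuotientGroup.mk'_surjective M₀ x
      exact ⟨QuotientGroup.mk h, by rw [QuotientGroup.map_mk]; rfl⟩
    -- cardinality bound
    set f : ↥M₀ →* ↥H ⧸ N := (QuotientGroup.mk' N).comp M₀.subtype with hfdef
    have hker : Nat.card f.ker ≤ n := by
      have hmm : ∀ x : f.ker, ((x : ↥M₀) : ↥H) ∈ N := by
        intro x
        exact (QuotientGroup.eq_one_iff _).mp x.2
      refine Nat.card_le_card_of_injective
        (fun x => (⟨((x : ↥M₀) : ↥H), hmm x⟩ : N)) ?_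
      intro a b hab
      ext1
      ext1
      simpa using congrArg Subtype.val hab
    have hrange : Nat.card f.range ≤ n := by
      obtain ⟨g, hg⟩ := (Subgroup.isCyclic f.range).exists_generator
      have hcard : Nat.card f.range = orderOf g :=
        (orderOf_eq_card_of_forall_mem_zpowers hg).symm
      rw [hcard]
      apply orderOf_le_of_pow_eq_one hn0
      have hgn : ((g : ↥H ⧸ N)) ^ n = 1 := by
        obtain ⟨m, hm⟩ := g.2
        rw [← hm, hfdef]
        simp only [MonoidHom.comp_apply, Subgroup.coe_subtype]
        rw [← map_pow]
        have hNmem : ((m : ↥M₀) : ↥H) ^ n ∈ N := hcomm ((memM₀ _).mp m.2)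
        exact (QuotientGroup.eq_one_iff _).mpr hNmem
      ext
      push_cast
      simpa using hgn
    have hcardM₀ : Nat.card M₀ ≤ n ^ 2 := by
      have h1 : Nat.card M₀ = Nat.card (↥M₀ ⧸ f.ker) * Nat.card f.ker :=
        Subgroup.card_eq_card_quotient_mul_card_subgroup f.ker
      have h2 : Nat.card (↥M₀ ⧸ f.ker) = Nat.card f.range :=
        Nat.card_congr (QuotientGroup.quotientKerEquivRange f).toEquiv
      rw [h1, h2, pow_two]
      exact Nat.mul_le_mul hrange hker
    -- assemble
    have hDmap : (commutator ↥H).map H.subtype = ⁅H, H⁆ := by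
      rw [_root_.commutator_def, Subgroup.map_commutator, ← MonoidHom.range_eq_map,
        Subgroup.range_subtype]
    have hmem : ∀ h : ↥H, h ∈ M₀ ↔ (↑h : G) ^ n ∈ ⁅H, H⁆ := by
      intro h
      rw [memM₀, ← hDmap, ← Subgroup.mem_map_iff_mem (Subgroup.subtype_injective H)]
      rfl
    have hcharM : (M₀.map H.subtype).Characteristic := by
      refine aux_char H M₀ (fun g => g ^ n ∈ ⁅H, H⁆) ?_ hmem
      intro φ g hg
      have hD : ∀ x : G, φ x ∈ ⁅H, H⁆ ↔ x ∈ ⁅H, H⁆ := by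
        intro x
        have hc := Subgroup.characteristic_iff_comap_eq.mp
          (Subgroup.commutator_characteristic H H) φ
        conv_rhs => rw [← hc]
        rfl
      rw [← map_pow]
      exact (hD _).mpr hg
    refine ⟨M₀.map H.subtype, hcharM, Subgroup.map_subtype_le _, ?_, ?_⟩
    · have : Nat.card (M₀.map H.subtype) = Nat.card M₀ :=
        (Nat.card_congr (Subgroup.equivMapOfInjective M₀ H.subtype
          (Subgroup.subtype_injective H)).toEquiv).symm
      rw [this, hn]
      exact hcardM₀
    · have hrw : (M₀.map H.subtype).subgroupOf H = M₀ :=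
        Subgroup.comap_map_eq_self_of_injective (Subgroup.subtype_injective H) M₀
      haveI : ((M₀.map H.subtype).subgroupOf H).Normal := by
        rw [hrw]; infer_instance
      exact isCyclic_of_surjective (QuotientGroup.quotientMulEquivOfEq hrw.symm)
        (QuotientGroup.quotientMulEquivOfEq hrw.symm).surjective
  · -- infinite case : torsion elements are exactly N
    have hNiff : ∀ h : ↥H, h ∈ N ↔ IsOfFinOrder h := by
      intro h
      constructor
      · intro hh
        exact isOfFinOrder_iff_pow_eq_one.mpr ⟨n, hn0, hNpow h hh⟩
      · intro hh
        obtain ⟨g, hg⟩ := hcyc.exists_generator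
        have hgord : ¬ IsOfFinOrder g := by
          intro hgf
          exact hfin (Set.finite_univ_iff.mp
            (hgf.finite_zpowers.subset fun x _ => hg x))
        have h2 : IsOfFinOrder ((QuotientGroup.mk' N) h) :=
          (QuotientGroup.mk' N).isOfFinOrder hh
        obtain ⟨k, hk⟩ := Subgroup.mem_zpowers_iff.mp (hg ((QuotientGroup.mk' N) h))
        obtain ⟨m, hm0, hme⟩ := isOfFinOrder_iff_pow_eq_one.mp h2
        have hkm : g ^ (k * (m : ℤ)) = 1 := by
          rw [zpow_mul, hk, zpow_natCast, hme]
        have hk0 : k = 0 := by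
          by_contra hk0
          apply hgord
          refine isOfFinOrder_iff_pow_eq_one.mpr ⟨(k * (m : ℤ)).natAbs, ?_, ?_⟩
          · simpa [Int.natAbs_pos, Int.mul_ne_zero_iff] using
              And.intro hk0 (by exact_mod_cast hm0.ne' : (m : ℤ) ≠ 0)
          · rcases Int.natAbs_eq (k * (m : ℤ)) with hc | hc
            · rw [← zpow_natCast, ← hc, hkm]
            · rw [← zpow_natCast]
              have : g ^ (-((k * (m : ℤ)).natAbs : ℤ)) = 1 := by rw [← hc, hkm]
              simpa [zpow_neg, inv_eq_one] using this
        have : (QuotientGroup.mk' N) h = 1 := by rw [← hk, hk0, zpow_zero]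
        exact (QuotientGroup.eq_one_iff h).mp this
    have hcharM : (N.map H.subtype).Characteristic := by
      refine aux_char H N IsOfFinOrder ?_ ?_
      · intro φ g hg
        exact φ.toMonoidHom.isOfFinOrder hg
      · intro h
        rw [hNiff]
        constructor
        · intro hh
          exact H.subtype.isOfFinOrder hh
        · intro hh
          obtain ⟨m, hm0, hme⟩ := isOfFinOrder_iff_pow_eq_one.mp hh
          refine isOfFinOrder_iff_pow_eq_one.mpr ⟨m, hm0, ?_⟩
          ext
          push_cast
          exact hme
    refine ⟨N.map H.subtype, hcharM, Subgroup.map_subtype_le _, ?_, ?_⟩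
    · have : Nat.card (N.map H.subtype) = Nat.card N :=
        (Nat.card_congr (Subgroup.equivMapOfInjective N H.subtype
          (Subgroup.subtype_injective H)).toEquiv).symm
      rw [this, hn, pow_two]
      exact Nat.le_mul_of_pos_left _ hn0
    · have hrw : (N.map H.subtype).subgroupOf H = N :=
        Subgroup.comap_map_eq_self_of_injective (Subgroup.subtype_injective H) N
      haveI : ((N.map H.subtype).subgroupOf H).Normal := by
        rw [hrw]; infer_instance
      exact isCyclic_of_surjective (QuotientGroup.quotientMulEquivOfEq hrw.symm)
        (QuotientGroup.quotientMulEquivOfEq hrw.symm).surjective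
end

section
/- There exists a function f : ℕ → ℕ such that the following holds. Let p be a prime and let G be a finite p-group that is not cyclic and that can be covered by m cyclic subgroups (i.e., G is the union of m cyclic subgroups). Then the order of G is at most f(m). -/
/-!
Let `x` have maximal order `p ^ e` in `G`. The `m` cyclic subgroups have order at most `p ^ e`
and are proper, hence of index at least `p`; so `|G| ≤ m * p ^ e` and `p ≤ m`.

To bound `e`: a finite `p`-group whose solutions of `g ^ p ^ 2 = 1` all lie in one cyclic
subgroup is cyclic. In a minimal counterexample take `u` of maximal order, `v ∉ ⟨u⟩` with
`v ^ p = u ^ (p * k)`, and a maximal subgroup `M₂ ∋ v`. Then `⟨u⟩` and `M₂` are cyclic, normal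
and generate the group, so `⟨u⟩ ⊓ M₂` is central and contains the commutator of `v` and `u ^ k`;
hence `(v * u⁻ᵏ) ^ p ^ 2 = 1` although `v * u⁻ᵏ ∉ ⟨u⟩`.

So some `w ∉ ⟨x⟩` has `w ^ p ^ 2 = 1`. The elements `x ^ p ^ j * w`, `j ≤ e - 2`, lie in
pairwise different members of the cover: if two lie in one cyclic `C`, then `x ^ p ^ j ∈ C`, so
`C` contains `w` and the subgroup of order `p ^ 2` of `⟨x⟩`, forcing `w ∈ ⟨x⟩`. Thus `e ≤ m + 1`.
-/

open Subgroup

section CyclicGroup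

variable {G : Type*} [Group G] [Finite G]

theorem IsCyclic.mem_zpowers_of_pow_orderOf_eq_one [IsCyclic G] {a b : G}
    (hb : b ^ orderOf a = 1) : b ∈ zpowers a := by
  classical
  let _ : Fintype G := Fintype.ofFinite G
  by_contra hba
  set S := (Finset.range (orderOf a)).image (a ^ ·)
  have hS : S.card = orderOf a :=
    (Finset.card_image_of_injOn (by simpa using pow_injOn_Iio_orderOf)).trans
      (Finset.card_range _)
  have hbS : b ∉ S := by rwa [← (isOfFinOrder_of_finite a).mem_zpowers_iff_mem_range_orderOf]
  have hsub : insert b S ⊆ ({g | g ^ orderOf a = 1} : Finset G) := by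
    refine Finset.insert_subset (by simpa using hb) fun g hg => ?_
    obtain ⟨i, -, rfl⟩ := Finset.mem_image.mp hg
    simp only [Finset.mem_filter, Finset.mem_univ, true_and]
    rw [pow_right_comm, pow_orderOf_eq_one, one_pow]
  have := (Finset.card_le_card hsub).trans (IsCyclic.card_pow_eq_one_le (orderOf_pos a))
  rw [Finset.card_insert_of_notMem hbS, hS] at this
  omega

theorem Subgroup.mem_zpowers_of_pow_orderOf_eq_one (C : Subgroup G) [IsCyclic C] {a b : G}
    (ha : a ∈ C) (hb : b ∈ C) (hba : b ^ orderOf a = 1) : b ∈ zpowers a := by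
  have : (⟨b, hb⟩ : C) ∈ zpowers (⟨a, ha⟩ : C) :=
    IsCyclic.mem_zpowers_of_pow_orderOf_eq_one (by ext; simpa [← orderOf_coe] using hba)
  obtain ⟨k, hk⟩ := this
  exact ⟨k, congrArg Subtype.val hk⟩

omit [Finite G] in
theorem Subgroup.card_le_orderOf_of_isCyclic (K : Subgroup G) [IsCyclic K] {u : G}
    (hu : ∀ g : G, orderOf g ≤ orderOf u) : Nat.card K ≤ orderOf u := by
  obtain ⟨γ, hγ⟩ := IsCyclic.exists_ofOrder_eq_natCard (α := K)
  rw [← hγ, ← orderOf_coe]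
  exact hu γ

omit [Finite G] in
theorem Subgroup.isCyclic_subgroupOf (C K : Subgroup G) [IsCyclic C] :
    IsCyclic (C.subgroupOf K) := by
  have : IsCyclic ↥(C ⊓ K) := isCyclic_of_le inf_le_left
  rw [← inf_subgroupOf_right]
  exact isCyclic_of_surjective (subgroupOfEquivOfLe inf_le_right).symm (MulEquiv.surjective _)

end CyclicGroup

theorem orderOf_pow_prime_pow {G : Type*} [Monoid G] {p e j : ℕ} (hp : p.Prime) {x : G}
    (hx : orderOf x = p ^ e) (hj : j ≤ e) : orderOf (x ^ p ^ j) = p ^ (e - j) := by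
  rw [orderOf_pow_of_dvd (pow_ne_zero _ hp.ne_zero) (hx ▸ pow_dvd_pow p hj), hx,
    Nat.pow_div hj hp.pos]

section CentralCommutator

variable {G : Type*} [Group G] {a b c : G}

theorem pow_mul_eq_mul_pow_mul_pow (hba : b * a = a * b * c) (hbc : Commute b c) (n : ℕ) :
    b ^ n * a = a * b ^ n * c ^ n := by
  induction n with
  | zero => simp
  | succ n ih =>
    calc b ^ (n + 1) * a = b * a * b ^ n * c ^ n := by
          rw [pow_succ', mul_assoc, ih]; simp only [mul_assoc]
      _ = a * b ^ (n + 1) * c ^ (n + 1) := by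
        rw [hba, pow_succ', pow_succ']
        simp only [mul_assoc]
        rw [(hbc.symm.pow_right n).left_comm]

theorem mul_pow_eq_mul_pow_mul_pow_choose (hba : b * a = a * b * c) (hac : Commute a c)
    (hbc : Commute b c) (n : ℕ) : (a * b) ^ n = a ^ n * b ^ n * c ^ n.choose 2 := by
  induction n with
  | zero => simp
  | succ n ih =>
    calc (a * b) ^ (n + 1) = a ^ n * (b ^ n * a) * b * c ^ n.choose 2 := by
          rw [pow_succ, ih]
          simp only [mul_assoc]
          rw [(hac.symm.pow_left _).left_comm, (hbc.symm.pow_left _).eq]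
      _ = a ^ (n + 1) * b ^ (n + 1) * c ^ (n + 1).choose 2 := by
        rw [pow_mul_eq_mul_pow_mul_pow hba hbc, pow_succ a, pow_succ b,
          Nat.choose_succ_succ' n 1, Nat.choose_one_right, pow_add]
        simp only [mul_assoc]
        rw [(hbc.symm.pow_left n).left_comm]

theorem mul_pow_sq_eq_one (hba : b * a = a * b * c) (hac : Commute a c) (hbc : Commute b c)
    {n : ℕ} (hn : a ^ n * b ^ n = 1) : (a * b) ^ (n ^ 2) = 1 := by
  have hcn : c ^ n = 1 := by
    have h := pow_mul_eq_mul_pow_mul_pow hba hbc n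
    rw [eq_inv_of_mul_eq_one_right hn, ← ((Commute.refl a).pow_left n).inv_left.eq] at h
    simpa using h
  rw [sq, pow_mul, mul_pow_eq_mul_pow_mul_pow_choose hba hac hbc, hn, one_mul, ← pow_mul,
    mul_comm, pow_mul, hcn, one_pow]

end CentralCommutator

theorem Subgroup.inf_le_center_of_sup_eq_top {G : Type*} [Group G] {A B : Subgroup G}
    [IsMulCommutative A] [IsMulCommutative B] (h : A ⊔ B = ⊤) : A ⊓ B ≤ center G := by
  intro x hx
  have hle : A ⊔ B ≤ centralizer {x} := sup_le
    ((le_centralizer_iff_isMulCommutative.2 ‹_›).trans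
      (centralizer_le (Set.singleton_subset_iff.2 hx.1)))
    ((le_centralizer_iff_isMulCommutative.2 ‹_›).trans
      (centralizer_le (Set.singleton_subset_iff.2 hx.2)))
  rw [h] at hle
  exact mem_center_iff.2 fun g => mem_centralizer_singleton_iff.1 (hle (mem_top g))

theorem isCoatom_zpowers_of_forall_orderOf_le {G : Type*} [Group G] [Finite G]
    (hnc : ¬IsCyclic G) (hproper : ∀ K : Subgroup G, K ≠ ⊤ → IsCyclic K) {u : G}
    (hu : ∀ g : G, orderOf g ≤ orderOf u) : IsCoatom (zpowers u) := by
  refine ⟨fun h => hnc (isCyclic_iff_exists_zpowers_eq_top.2 ⟨u, h⟩), fun K hK => ?_⟩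
  by_contra hKtop
  have := hproper K hKtop
  exact hK.ne (eq_of_le_of_card_ge hK.le
    (by rw [Nat.card_zpowers]; exact K.card_le_orderOf_of_isCyclic hu))

namespace IsPGroup

variable {p : ℕ} {G : Type*} [Group G]

theorem exists_notMem_pow_mem (hG : IsPGroup p G) {M : Subgroup G} (hM : M ≠ ⊤) :
    ∃ v ∉ M, v ^ p ∈ M := by
  classical
  obtain ⟨g, hg⟩ : ∃ g, g ∉ M := by
    by_contra! h
    exact hM ((eq_top_iff' M).2 h)
  have hex : ∃ n, g ^ p ^ n ∈ M := let ⟨a, ha⟩ := hG g; ⟨a, ha ▸ M.one_mem⟩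
  have hn : Nat.find hex ≠ 0 := fun h => hg (by simpa [h] using Nat.find_spec hex)
  refine ⟨g ^ p ^ (Nat.find hex - 1), Nat.find_min hex (by omega), ?_⟩
  rw [← pow_mul, ← pow_succ, Nat.sub_add_cancel (Nat.pos_of_ne_zero hn)]
  exact Nat.find_spec hex

variable [Fact p.Prime]

theorem pow_eq_one_of_orderOf_le (hG : IsPGroup p G) {g : G} {k : ℕ}
    (h : orderOf g ≤ p ^ k) : g ^ p ^ k = 1 := by
  obtain ⟨a, ha⟩ := IsPGroup.iff_orderOf.1 hG g
  rw [ha, Nat.pow_le_pow_iff_right (Fact.out : p.Prime).one_lt] at h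
  exact orderOf_dvd_iff_pow_eq_one.1 (ha ▸ pow_dvd_pow p h)

variable [Finite G]

theorem exists_pow_eq_pow_of_pow_mem_zpowers (hG : IsPGroup p G) {u v : G}
    (hvu : orderOf v ≤ orderOf u) (hv : v ∉ zpowers u) (hvp : v ^ p ∈ zpowers u) :
    ∃ k : ℕ, v ^ p = (u ^ k) ^ p := by
  obtain ⟨n, hn⟩ := mem_powers_iff_mem_zpowers.2 hvp
  by_cases hpn : p ∣ n
  · obtain ⟨k, rfl⟩ := hpn
    exact ⟨k, by rw [← hn, ← pow_mul, mul_comm]⟩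
  obtain ⟨c, hc⟩ := IsPGroup.iff_orderOf.1 hG u
  have hcop : n.gcd (orderOf u) = 1 := by
    rw [hc]
    exact Nat.Coprime.pow_right c
      (Nat.coprime_comm.1 ((Nat.Prime.coprime_iff_not_dvd Fact.out).2 hpn))
  have hle : zpowers u ≤ zpowers v := by
    rw [zpowers_le]
    refine zpowers_le.2 ?_ (mem_zpowers_pow_iff.2 hcop)
    rw [show u ^ n = v ^ p from hn]
    exact pow_mem (mem_zpowers v) p
  have heq := eq_of_le_of_card_ge hle (by rwa [Nat.card_zpowers, Nat.card_zpowers])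
  exact absurd (heq ▸ mem_zpowers v) hv

theorem exists_pow_sq_eq_one_notMem_zpowers (hG : IsPGroup p G) (hnc : ¬IsCyclic G)
    (hproper : ∀ K : Subgroup G, K ≠ ⊤ → IsCyclic K) {u : G}
    (hu : ∀ g : G, orderOf g ≤ orderOf u) : ∃ w : G, w ^ p ^ 2 = 1 ∧ w ∉ zpowers u := by
  have hM := isCoatom_zpowers_of_forall_orderOf_le hnc hproper hu
  have hnormal : ∀ K : Subgroup G, IsCoatom K → K.Normal := fun K =>
    (Group.normalizerCondition_of_isNilpotent (h := hG.isNilpotent)).normal_of_coatom K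
  obtain ⟨v, hvM, hvp⟩ := hG.exists_notMem_pow_mem hM.1
  obtain ⟨k, hk⟩ := hG.exists_pow_eq_pow_of_pow_mem_zpowers (hu v) hvM hvp
  obtain ⟨M₂, hM₂, hvM₂⟩ := (eq_top_or_exists_le_coatom (zpowers v)).resolve_left
    fun h => hnc (isCyclic_iff_exists_zpowers_eq_top.2 ⟨v, h⟩)
  have hv : v ∈ M₂ := hvM₂ (mem_zpowers v)
  have := hproper M₂ hM₂.1
  have hcenter : zpowers u ⊓ M₂ ≤ center G :=
    inf_le_center_of_sup_eq_top (hM.sup_eq_top_of_ne hM₂ fun h => hvM (h ▸ hv))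
  set s := (u ^ k)⁻¹
  have hs : s ∈ zpowers u := inv_mem (pow_mem (mem_zpowers u) k)
  set c := s⁻¹ * v⁻¹ * s * v
  have hc : c ∈ center G := by
    refine hcenter ⟨?_, ?_⟩
    · simpa [c, mul_assoc] using
        mul_mem (inv_mem hs) ((hnormal _ hM).conj_mem s hs v⁻¹)
    · simpa [c] using mul_mem ((hnormal _ hM₂).conj_mem v⁻¹ (inv_mem hv) s⁻¹) hv
  refine ⟨v * s, mul_pow_sq_eq_one (by simp only [c]; group)
    (mem_center_iff.1 hc v) (mem_center_iff.1 hc s) (by rw [inv_pow, ← hk, mul_inv_cancel]),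
    fun h => hvM ?_⟩
  simpa using mul_mem h (inv_mem hs)

theorem isCyclic_of_forall_pow_sq_eq_one_mem (hG : IsPGroup p G) {C : Subgroup G} [IsCyclic C]
    (hC : ∀ g : G, g ^ p ^ 2 = 1 → g ∈ C) : IsCyclic G := by
  induction hn : Nat.card G using Nat.strong_induction_on generalizing G with
  | _ n ih =>
  by_contra hnc
  have hproper (K : Subgroup G) (hK : K ≠ ⊤) : IsCyclic K := by
    have := C.isCyclic_subgroupOf K
    exact ih _ (hn ▸ lt_of_le_of_ne K.card_le_card_group (mt (card_eq_iff_eq_top K).1 hK))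
      (hG.to_subgroup K) (C := C.subgroupOf K)
      (fun g hg => mem_subgroupOf.2 (hC g (by simpa using congrArg Subtype.val hg))) rfl
  obtain ⟨u, hu⟩ := Finite.exists_max (orderOf : G → ℕ)
  by_cases hu2 : orderOf u ≤ p ^ 2
  · refine hnc (isCyclic_of_surjective C.subtype fun g => ⟨⟨g, hC g ?_⟩, rfl⟩)
    exact hG.pow_eq_one_of_orderOf_le ((hu g).trans hu2)
  obtain ⟨w, hw, hwu⟩ := hG.exists_pow_sq_eq_one_notMem_zpowers hnc hproper hu
  obtain ⟨c, hc⟩ := IsPGroup.iff_orderOf.1 hG u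
  have hc2 : 2 ≤ c := by
    by_contra! h
    exact hu2 (hc ▸ Nat.pow_le_pow_right (Fact.out : p.Prime).pos h.le)
  set y := u ^ p ^ (c - 2)
  have hy : orderOf y = p ^ 2 := by
    rw [orderOf_pow_prime_pow Fact.out hc (Nat.sub_le c 2), Nat.sub_sub_self hc2]
  have hwy := C.mem_zpowers_of_pow_orderOf_eq_one (hC y (hy ▸ pow_orderOf_eq_one y)) (hC w hw)
    (hy ▸ hw)
  exact hwu (zpowers_le.2 (pow_mem (mem_zpowers u) _) hwy)

end IsPGroup

section Cover

variable {G : Type*} [Group G] {ι : Type*} [Fintype ι]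

theorem card_le_sum_card_of_forall_exists_mem (C : ι → Subgroup G)
    (hcover : ∀ g : G, ∃ i, g ∈ C i) : Nat.card G ≤ ∑ i, Nat.card (C i) := by
  have h : ⋃ i, (C i : Set G) = Set.univ :=
    Set.eq_univ_of_forall fun g => Set.mem_iUnion.2 (hcover g)
  calc Nat.card G = (⋃ i, (C i : Set G)).ncard := by rw [h, Set.ncard_univ]
    _ ≤ ∑ i, (C i : Set G).ncard := Set.ncard_iUnion_le_of_fintype _
    _ = ∑ i, Nat.card (C i) := by simp only [← Nat.card_coe_set_eq, SetLike.coe_sort_coe]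

variable [Finite G]

theorem IsPGroup.prime_le_card_of_forall_exists_mem {p : ℕ} [Fact p.Prime] (hG : IsPGroup p G)
    (C : ι → Subgroup G) (hC : ∀ i, C i ≠ ⊤) (hcover : ∀ g : G, ∃ i, g ∈ C i) :
    p ≤ Fintype.card ι := by
  have hindex (i : ι) : p * Nat.card (C i) ≤ Nat.card G := by
    obtain ⟨n, hn⟩ := hG.index (C i)
    have : n ≠ 0 := by
      rintro rfl
      exact hC i (index_eq_one.1 (by simpa using hn))
    rw [← (C i).card_mul_index, hn, mul_comm p]
    exact Nat.mul_le_mul_left _ (Nat.le_self_pow this p)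
  have := calc p * Nat.card G ≤ p * ∑ i, Nat.card (C i) :=
        Nat.mul_le_mul_left p (card_le_sum_card_of_forall_exists_mem C hcover)
    _ = ∑ i, p * Nat.card (C i) := Finset.mul_sum _ _ _
    _ ≤ ∑ _i : ι, Nat.card G := Finset.sum_le_sum fun i _ => hindex i
    _ = Fintype.card ι * Nat.card G := by simp
  exact Nat.le_of_mul_le_mul_right this Nat.card_pos

variable {p : ℕ} [Fact p.Prime]

theorem mem_zpowers_of_pow_prime_pow_mul_mem (C : Subgroup G) [IsCyclic C] {x w : G}
    {e β j k : ℕ} (hx : orderOf x = p ^ e) (hw : w ^ p ^ β = 1) (hjk : j < k) (hkβ : k + β ≤ e)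
    (hj : x ^ p ^ j * w ∈ C) (hk : x ^ p ^ k * w ∈ C) : w ∈ zpowers x := by
  have hp : p.Prime := Fact.out
  set z := x ^ p ^ j
  have hpow : 1 ≤ p ^ (k - j) := Nat.one_le_pow _ _ hp.pos
  have hzk : x ^ p ^ k = z ^ (p ^ (k - j) - 1) * z := by
    rw [← pow_succ, Nat.sub_add_cancel hpow, ← pow_mul, ← pow_add, Nat.add_sub_cancel' hjk.le]
  have hz : z ∈ C := by
    have hdiff : z ^ (p ^ (k - j) - 1) ∈ C := by
      simpa [hzk, mul_assoc] using mul_mem hk (inv_mem hj)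
    refine zpowers_le.2 hdiff (mem_zpowers_pow_iff.2 ?_)
    rw [orderOf_pow_prime_pow hp hx (by omega)]
    exact Nat.Coprime.pow_right _ (Nat.Coprime.coprime_dvd_right (dvd_pow_self p (by omega))
      ((Nat.coprime_self_sub_left hpow).2 (Nat.coprime_one_left _)))
  have hwC : w ∈ C := by simpa using mul_mem (inv_mem hz) hj
  have hyC : x ^ p ^ (e - β) ∈ C := by
    rw [show e - β = j + (e - β - j) by omega, pow_add, pow_mul]
    exact pow_mem hz _
  have hy : orderOf (x ^ p ^ (e - β)) = p ^ β := by
    rw [orderOf_pow_prime_pow hp hx (Nat.sub_le e β), Nat.sub_sub_self (by omega)]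
  exact zpowers_le.2 (pow_mem (mem_zpowers x) _)
    (C.mem_zpowers_of_pow_orderOf_eq_one hyC hwC (hy ▸ hw))

theorem sub_lt_card_of_forall_exists_mem_isCyclic (C : ι → Subgroup G)
    [∀ i, IsCyclic (C i)] (hcover : ∀ g : G, ∃ i, g ∈ C i) {x w : G} {e β : ℕ}
    (hx : orderOf x = p ^ e) (hw : w ^ p ^ β = 1) (hwx : w ∉ zpowers x) :
    e - β < Fintype.card ι := by
  choose idx hidx using hcover
  have hne {j k : ℕ} (hjk : j < k) (hk : k ≤ e - β) :
      idx (x ^ p ^ j * w) ≠ idx (x ^ p ^ k * w) := fun h =>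
    hwx (mem_zpowers_of_pow_prime_pow_mul_mem _ hx hw hjk (by omega) (hidx _) (h ▸ hidx _))
  have hinj : Function.Injective fun j : Fin (e - β + 1) => idx (x ^ p ^ (j : ℕ) * w) := by
    intro j k hjk
    by_contra hjk'
    rcases lt_or_gt_of_ne (Fin.val_ne_of_ne hjk') with h | h
    · exact hne h (by omega) hjk
    · exact hne h (by omega) hjk.symm
  simpa using Fintype.card_le_of_injective _ hinj

end Cover

/-- **Lemma 2.3.** There is a function `f` such that every finite noncyclic `p`-group that can
be covered by `m` cyclic subgroups has order at most `f m`. -/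
theorem noncyclic_p_group_covered_by_cyclic_bounded :
    ∃ f : ℕ → ℕ,
      ∀ (m p : ℕ), p.Prime →
      ∀ (G : Type) (_ : Group G) (_ : Finite G), IsPGroup p G → ¬ IsCyclic G →
      (∃ C : Fin m → Subgroup G, (∀ i, IsCyclic ↥(C i)) ∧
          ∀ g : G, g ∈ ⋃ i, ((C i : Subgroup G) : Set G)) →
      Nat.card G ≤ f m := by
  refine ⟨fun m => m ^ (m + 2), ?_⟩
  rintro m p hp G _ _ hG hnc ⟨C, hC, hcover⟩
  have := Fact.mk hp
  replace hcover (g : G) : ∃ i, g ∈ C i := Set.mem_iUnion.1 (hcover g)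
  have hproper (i : Fin m) : C i ≠ ⊤ := fun h =>
    hnc (isCyclic_of_surjective (h ▸ topEquiv : C i ≃* G) (MulEquiv.surjective _))
  have hpm : p ≤ m := by simpa using hG.prime_le_card_of_forall_exists_mem C hproper hcover
  obtain ⟨x, hx⟩ := Finite.exists_max (orderOf : G → ℕ)
  obtain ⟨e, he⟩ := IsPGroup.iff_orderOf.1 hG x
  obtain ⟨w, hw, hwx⟩ : ∃ w : G, w ^ p ^ 2 = 1 ∧ w ∉ zpowers x := by
    by_contra! h
    exact hnc (hG.isCyclic_of_forall_pow_sq_eq_one_mem h)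
  have hem : e - 2 < m := by
    simpa using sub_lt_card_of_forall_exists_mem_isCyclic C hcover he hw hwx
  calc Nat.card G ≤ ∑ i, Nat.card (C i) := card_le_sum_card_of_forall_exists_mem C hcover
    _ ≤ ∑ _i : Fin m, p ^ e :=
        Finset.sum_le_sum fun i _ => he ▸ (C i).card_le_orderOf_of_isCyclic hx
    _ = m * p ^ e := by simp
    _ ≤ m * m ^ (m + 1) := Nat.mul_le_mul_left m ((Nat.pow_le_pow_left hpm e).trans
        (Nat.pow_le_pow_right (by omega) (by omega)))
    _ = m ^ (m + 2) := by ring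
end

section
/- If G is a finite group, then the nilpotent residual γ∞(G) is generated by the set of commutators [x,y] such that x, y are elements of G of mutually coprime orders. -/
/-!
If `⁅x, y⁆` commutes with `x` and `y`, then `⁅x, y⁆ ^ n = ⁅x ^ n, y⁆`, so its order divides both
`orderOf x` and `orderOf y`. Applied modulo `γ_{i+1}`, where a commutator lying in `γ_i` is central,
this puts every commutator of elements of coprime orders into every `γ_i`.

Conversely, let `K` be the normal subgroup generated by these commutators and `P` a Sylow
`p`-subgroup of `G`. The `p'`-elements generate a normal subgroup of `p`-power index, so together
with `P` they generate `G`; modulo `K` they centralize the image of `P`. Hence every Sylow subgroup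
of `G ⧸ K` is normal, `G ⧸ K` is nilpotent, and some `γ_n` lies in `K`.
-/

open scoped commutatorElement

section

variable {G : Type*} [Group G]

theorem orderOf_conj (g x : G) : orderOf (g * x * g⁻¹) = orderOf x :=
  (SemiconjBy.orderOf_eq g (by simp [SemiconjBy, mul_assoc])).symm

theorem Subgroup.closure_normal_of_conj_mem {s : Set G}
    (hs : ∀ g x, x ∈ s → g * x * g⁻¹ ∈ s) : (closure s).Normal := by
  have : Group.conjugatesOfSet s = s := by
    refine subset_antisymm (fun x hx ↦ ?_) Group.subset_conjugatesOfSet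
    obtain ⟨a, ha, hax⟩ := Group.mem_conjugatesOfSet_iff.mp hx
    obtain ⟨c, rfl⟩ := isConj_iff.mp hax
    exact hs c a ha
  rw [← this]
  exact Subgroup.normalClosure_normal

theorem commutatorElement_pow_left_of_commute {x y : G} (h : Commute ⁅x, y⁆ x) (n : ℕ) :
    ⁅x ^ n, y⁆ = ⁅x, y⁆ ^ n := by
  induction n with
  | zero => simp
  | succ n ih =>
    calc ⁅x ^ (n + 1), y⁆ = x * ⁅x ^ n, y⁆ * (y * x⁻¹ * y⁻¹) := by
          simp only [commutatorElement_def, pow_succ']; group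
      _ = ⁅x, y⁆ ^ n * ⁅x, y⁆ := by
          rw [ih, ← mul_assoc, ← (h.pow_left n).eq, commutatorElement_def]; group
      _ = ⁅x, y⁆ ^ (n + 1) := (pow_succ _ _).symm

theorem commutatorElement_eq_one_of_coprime {x y : G} (hx : Commute ⁅x, y⁆ x)
    (hy : Commute ⁅x, y⁆ y) (hxy : (orderOf x).Coprime (orderOf y)) : ⁅x, y⁆ = 1 := by
  have hdvd_x : orderOf ⁅x, y⁆ ∣ orderOf x := orderOf_dvd_of_pow_eq_one <| by
    rw [← commutatorElement_pow_left_of_commute hx, pow_orderOf_eq_one, commutatorElement_one_left]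
  have hdvd_y : orderOf ⁅x, y⁆ ∣ orderOf y := by
    have hy' : Commute ⁅y, x⁆ y := by rw [← commutatorElement_inv]; exact hy.inv_left
    rw [← orderOf_inv, commutatorElement_inv]
    refine orderOf_dvd_of_pow_eq_one ?_
    rw [← commutatorElement_pow_left_of_commute hy', pow_orderOf_eq_one, commutatorElement_one_left]
  exact orderOf_eq_one_iff.mp (Nat.eq_one_of_dvd_coprimes hxy hdvd_x hdvd_y)

theorem commutatorElement_mem_lowerCentralSeries_of_coprime {x y : G}
    (hxy : (orderOf x).Coprime (orderOf y)) (n : ℕ) :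
    ⁅x, y⁆ ∈ (⊤ : Subgroup G).lowerCentralSeries n := by
  induction n with
  | zero => exact Subgroup.mem_top _
  | succ n ih =>
    set π := QuotientGroup.mk' ((⊤ : Subgroup G).lowerCentralSeries (n + 1))
    have central : ∀ g, Commute (π ⁅x, y⁆) (π g) := fun g ↦ by
      rw [← commutatorElement_eq_one_iff_commute, ← map_commutatorElement,
        QuotientGroup.mk'_apply, QuotientGroup.eq_one_iff]
      exact Subgroup.commutator_mem_commutator ih (Subgroup.mem_top g)
    rw [← QuotientGroup.eq_one_iff, ← QuotientGroup.mk'_apply, map_commutatorElement]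
    rw [map_commutatorElement] at central
    exact commutatorElement_eq_one_of_coprime (central x) (central y)
      (Nat.Coprime.coprime_dvd_left (orderOf_map_dvd _ x)
        (Nat.Coprime.coprime_dvd_right (orderOf_map_dvd _ y) hxy))

theorem exists_lowerCentralSeries_le_of_isNilpotent_quotient (N : Subgroup G) [N.Normal]
    [Group.IsNilpotent (G ⧸ N)] : ∃ n, (⊤ : Subgroup G).lowerCentralSeries n ≤ N := by
  obtain ⟨n, hn⟩ := Subgroup.nilpotent_iff_lowerCentralSeries.mp ‹Group.IsNilpotent (G ⧸ N)›
  refine ⟨n, ?_⟩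
  rw [← QuotientGroup.ker_mk' N, ← Subgroup.map_eq_bot_iff, Subgroup.map_lowerCentralSeries,
    Subgroup.map_top_of_surjective _ (QuotientGroup.mk'_surjective N), hn]

instance Subgroup.closure_coprime_orderOf_normal (p : ℕ) :
    (Subgroup.closure {g : G | p.Coprime (orderOf g)}).Normal :=
  Subgroup.closure_normal_of_conj_mem fun g x hx ↦ by rwa [Set.mem_ofPred_eq, orderOf_conj]

theorem isPGroup_quotient_closure_coprime_orderOf (p : ℕ) [hp : Fact p.Prime] [Finite G] :
    IsPGroup p (G ⧸ Subgroup.closure {g : G | p.Coprime (orderOf g)}) := by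
  refine isPGroup_iff_orderOf_dvd_pow.mpr fun q ↦ ?_
  obtain ⟨g, rfl⟩ := QuotientGroup.mk_surjective q
  refine ⟨(orderOf g).factorization p, orderOf_dvd_of_pow_eq_one ?_⟩
  rw [← QuotientGroup.mk_pow, QuotientGroup.eq_one_iff]
  refine Subgroup.subset_closure ?_
  rw [Set.mem_ofPred_eq, orderOf_pow_of_dvd (pow_ne_zero _ hp.out.ne_zero) (Nat.ordProj_dvd _ _)]
  exact Nat.coprime_ordCompl hp.out (orderOf_pos g).ne'

theorem Sylow.sup_closure_coprime_orderOf_eq_top {p : ℕ} [hp : Fact p.Prime] [Finite G]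
    (P : Sylow p G) : (P : Subgroup G) ⊔ Subgroup.closure {g : G | p.Coprime (orderOf g)} = ⊤ := by
  obtain ⟨n, hn⟩ := IsPGroup.iff_card.mp (isPGroup_quotient_closure_coprime_orderOf p (G := G))
  rw [← Subgroup.index_eq_one]
  refine Nat.eq_one_of_dvd_coprimes
    (Nat.Coprime.pow_left n ((Nat.Prime.coprime_iff_not_dvd hp.out).mpr P.not_dvd_index))
    ?_ (Subgroup.index_dvd_of_le le_sup_left)
  rw [← hn, ← Subgroup.index_eq_card]
  exact Subgroup.index_dvd_of_le le_sup_right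

theorem isNilpotent_quotient_of_coprime_commutator_mem [Finite G] (N : Subgroup G) [N.Normal]
    (h : ∀ x y : G, (orderOf x).Coprime (orderOf y) → ⁅x, y⁆ ∈ N) : Group.IsNilpotent (G ⧸ N) := by
  have commute_mk : ∀ x y : G, (orderOf x).Coprime (orderOf y) →
      Commute (x : G ⧸ N) (y : G ⧸ N) := fun x y hxy ↦ by
    rw [← commutatorElement_eq_one_iff_commute, ← QuotientGroup.mk'_apply,
      ← QuotientGroup.mk'_apply, ← map_commutatorElement, QuotientGroup.mk'_apply,
      QuotientGroup.eq_one_iff]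
    exact h x y hxy
  refine (Group.isNilpotent_of_finite_tfae.out 0 3).mpr fun (p : ℕ) (_ : Fact p.Prime) P ↦ ?_
  obtain ⟨P, rfl⟩ := Sylow.mapSurjective_surjective (QuotientGroup.mk'_surjective N) p P
  rw [Sylow.coe_mapSurjective, ← Subgroup.normalizer_eq_top_iff, eq_top_iff,
    ← Subgroup.map_top_of_surjective _ (QuotientGroup.mk'_surjective N),
    ← P.sup_closure_coprime_orderOf_eq_top, Subgroup.map_sup]
  refine sup_le Subgroup.le_normalizer ((Subgroup.centralizer_le_normalizer _).trans' ?_)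
  rw [Subgroup.map_le_iff_le_comap, Subgroup.closure_le]
  rintro w hw _ ⟨s, hs, rfl⟩
  obtain ⟨k, hk⟩ := P.isPGroup'.exists_orderOf_dvd_pow ⟨s, hs⟩
  rw [Subgroup.orderOf_mk] at hk
  exact (commute_mk s w ((Nat.Coprime.pow_left k hw).coprime_dvd_left hk)).eq

end

/-- For a finite group `G`, the nilpotent residual `γ∞(G) = ⋂ i, γ_i(G)` is generated by the
commutators `[x,y]` where `x, y` are elements of `G` of mutually coprime orders. -/
theorem nilpotent_residual_eq_closure_coprime_commutators
    (G : Type) [Group G] [Finite G] :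
    (⨅ i : ℕ, (⊤ : Subgroup G).lowerCentralSeries i) =
      Subgroup.closure {z : G | ∃ x y : G,
        Nat.Coprime (orderOf x) (orderOf y) ∧ z = ⁅x, y⁆} := by
  set K := Subgroup.closure {z : G | ∃ x y : G,
    Nat.Coprime (orderOf x) (orderOf y) ∧ z = ⁅x, y⁆}
  have : K.Normal := Subgroup.closure_normal_of_conj_mem <| by
    rintro g _ ⟨x, y, hxy, rfl⟩
    exact ⟨g * x * g⁻¹, g * y * g⁻¹, by rwa [orderOf_conj, orderOf_conj],
      conjugate_commutatorElement x y g⟩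
  have : Group.IsNilpotent (G ⧸ K) := isNilpotent_quotient_of_coprime_commutator_mem K
    fun x y hxy ↦ Subgroup.subset_closure ⟨x, y, hxy, rfl⟩
  obtain ⟨n, hn⟩ := exists_lowerCentralSeries_le_of_isNilpotent_quotient K
  refine le_antisymm ((iInf_le _ n).trans hn) ((Subgroup.closure_le _).mpr ?_)
  rintro _ ⟨x, y, hxy, rfl⟩
  exact Subgroup.mem_iInf.mpr (commutatorElement_mem_lowerCentralSeries_of_coprime hxy)
end

section
/- Let G be a finite group that possesses m cyclic subgroups whose union contains all commutators of G. Then for every commutator x of G, the cyclic subgroup ⟨x⟩ has at most m conjugates in G; equivalently, the normalizer N_G(⟨x⟩) has index at most m in G. -/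
/-!
A subgroup of a finite cyclic group is determined by its order. Every conjugate of `⟨z⟩`, for
`z` a commutator, is generated by a commutator and so lies in one of the `m` cyclic subgroups;
since all conjugates have the same order, two conjugates lying in the same cyclic subgroup
coincide. Hence there are at most `m` conjugates, and their number is the index of the
normalizer.
-/

open scoped commutatorElement

namespace IsCyclic

variable {α : Type*} [Group α] [Finite α] [IsCyclic α]

theorem coe_subgroup_eq_setOf_pow_card_eq_one (K : Subgroup α) :
    (K : Set α) = {x | x ^ Nat.card K = 1} := by
  classical
  have := Fintype.ofFinite α
  refine Set.eq_of_subset_of_ncard_le (fun x hx => ?_) ?_ (Set.toFinite _)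
  · have h := congrArg Subtype.val (pow_card_eq_one' (G := K) (x := ⟨x, hx⟩))
    simpa only [Set.mem_ofPred_eq, SubgroupClass.coe_pow, OneMemClass.coe_one] using h
  · rw [Set.ncard_eq_toFinset_card', Set.toFinset_ofPred, ← Nat.card_coe_set_eq]
    exact IsCyclic.card_pow_eq_one_le Nat.card_pos

theorem subgroup_eq_of_card_eq {K L : Subgroup α} (h : Nat.card K = Nat.card L) : K = L :=
  SetLike.coe_injective <| by
    rw [coe_subgroup_eq_setOf_pow_card_eq_one, coe_subgroup_eq_setOf_pow_card_eq_one, h]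

end IsCyclic

namespace Subgroup

variable {G : Type*} [Group G]

theorem eq_of_le_of_card_eq {C K L : Subgroup G} [Finite C] [IsCyclic C] (hK : K ≤ C)
    (hL : L ≤ C) (h : Nat.card K = Nat.card L) : K = L := by
  have hsub : K.subgroupOf C = L.subgroupOf C := IsCyclic.subgroup_eq_of_card_eq <| by
    rw [Nat.card_congr (subgroupOfEquivOfLe hK).toEquiv,
      Nat.card_congr (subgroupOfEquivOfLe hL).toEquiv, h]
  rwa [subgroupOf_inj, inf_of_le_left hK, inf_of_le_left hL] at hsub

theorem card_le_of_forall_exists_le_isCyclic {ι : Type*} [Finite ι] [Finite G]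
    {S : Set (Subgroup G)} {n : ℕ} (hcard : ∀ K ∈ S, Nat.card K = n) (C : ι → Subgroup G)
    (hC : ∀ i, IsCyclic (C i)) (hle : ∀ K ∈ S, ∃ i, K ≤ C i) : Nat.card S ≤ Nat.card ι := by
  choose idx hidx using hle
  refine Nat.card_le_card_of_injective (fun K : S => idx K K.2)
    fun K L (hKL : idx K K.2 = idx L L.2) => Subtype.ext ?_
  have := hC (idx K K.2)
  have hLK : (L : Subgroup G) ≤ C (idx K K.2) := hKL ▸ hidx L L.2
  exact eq_of_le_of_card_eq (hidx K K.2) hLK ((hcard K K.2).trans (hcard L L.2).symm)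

theorem map_conj_eq_map_conj_iff {H : Subgroup G} {a b : G} :
    H.map (MulAut.conj a).toMonoidHom = H.map (MulAut.conj b).toMonoidHom ↔
      a⁻¹ * b ∈ normalizer (H : Set G) := by
  have hb : H.map (MulAut.conj b).toMonoidHom =
      (H.map (MulAut.conj (a⁻¹ * b)).toMonoidHom).map (MulAut.conj a).toMonoidHom := by
    rw [map_map]
    congr 1
    ext
    simp [mul_assoc]
  rw [hb, (map_injective (MulAut.conj a).injective).eq_iff, eq_comm,
    mem_normalizer_iff_map_conj_eq]
  rfl

theorem index_normalizer_eq_card_conjugates (H : Subgroup G) :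
    (normalizer (H : Set G)).index =
      Nat.card {K : Subgroup G | ∃ g : G, H.map (MulAut.conj g).toMonoidHom = K} := by
  refine Nat.card_congr (Equiv.ofBijective
    (Quotient.lift (fun g => ⟨H.map (MulAut.conj g).toMonoidHom, g, rfl⟩)
      fun _ _ hab => Subtype.ext <|
        map_conj_eq_map_conj_iff.2 (QuotientGroup.leftRel_apply.1 hab))
    ⟨?_, ?_⟩)
  · rintro ⟨a⟩ ⟨b⟩ hab
    exact Quotient.sound (QuotientGroup.leftRel_apply.2
      (map_conj_eq_map_conj_iff.1 (congrArg Subtype.val hab)))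
  · rintro ⟨K, g, rfl⟩
    exact ⟨g, rfl⟩

end Subgroup

/-- If `G` is a finite group possessing `m` cyclic subgroups whose union contains all
commutators, then for every commutator `z` the cyclic subgroup `⟨z⟩` has at most `m`
conjugates in `G`; equivalently, its normalizer has index at most `m`. -/
theorem normalizer_of_commutator_small_index
    (m : ℕ) (G : Type) [Group G] [Finite G]
    (hcov : ∃ C : Fin m → Subgroup G, (∀ i, IsCyclic ↥(C i)) ∧
      ∀ x y : G, ⁅x, y⁆ ∈ ⋃ i, ((C i : Subgroup G) : Set G)) :
    ∀ z : G, (∃ x y : G, z = ⁅x, y⁆) →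
      Nat.card {K : Subgroup G | ∃ g : G,
          (Subgroup.closure {z}).map (MulAut.conj g).toMonoidHom = K} ≤ m ∧
      (Subgroup.normalizer ((Subgroup.closure {z} : Subgroup G) : Set G)).index ≤ m := by
  rintro z ⟨x, y, rfl⟩
  obtain ⟨C, hC, hcov⟩ := hcov
  set H := Subgroup.closure {⁅x, y⁆} with hH
  have hcard : ∀ K ∈ {K : Subgroup G | ∃ g : G, H.map (MulAut.conj g).toMonoidHom = K},
      Nat.card K = Nat.card H := by
    rintro K ⟨g, rfl⟩
    exact Subgroup.card_map_of_injective (MulAut.conj g).injective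
  have hle : ∀ K ∈ {K : Subgroup G | ∃ g : G, H.map (MulAut.conj g).toMonoidHom = K},
      ∃ i, K ≤ C i := by
    rintro K ⟨g, rfl⟩
    obtain ⟨i, hi⟩ := Set.mem_iUnion.1 (hcov (MulAut.conj g x) (MulAut.conj g y))
    refine ⟨i, ?_⟩
    rw [hH, ← Subgroup.zpowers_eq_closure, MonoidHom.map_zpowers, Subgroup.zpowers_le]
    simpa [map_commutatorElement] using hi
  have hconj := (Subgroup.card_le_of_forall_exists_le_isCyclic hcard C hC hle).trans_eq
    (Nat.card_fin m)
  exact ⟨hconj, (Subgroup.index_normalizer_eq_card_conjugates _).trans_le hconj⟩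
end

section
/- Let G be a finite group that possesses m cyclic subgroups whose union contains all commutators of G, and let T be the intersection of the normalizers N_G(⟨x⟩) taken over all commutators x of G. Then the commutator subgroup T' centralizes G'; in particular, T is metabelian. -/
/-!
The automorphism group of a cyclic group is abelian (it embeds in `(ZMod n)ˣ`). So if `s, t`
normalize a cyclic subgroup `⟨z⟩`, the conjugation automorphisms they induce on `⟨z⟩` commute and
`⁅s, t⁆` acts trivially, i.e. centralizes `z`. Applied to every commutator `z`, this puts `T'` in
the centralizer of `G'`; since `T' ≤ G'`, the group `T'` is abelian.
-/

open scoped commutatorElement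

open Subgroup

theorem IsCyclic.commute_mulAut {H : Type*} [Group H] [IsCyclic H] (φ ψ : MulAut H) :
    Commute φ ψ :=
  (IsCyclic.mulAutMulEquiv H).injective <| by simp only [map_mul, mul_comm]

namespace Subgroup

variable {G : Type*} [Group G]

theorem commutator_normalizer_le_centralizer (H : Subgroup G) [IsCyclic H] :
    ⁅normalizer (H : Set G), normalizer (H : Set G)⁆ ≤ centralizer (H : Set G) := by
  rw [commutator_le]
  intro s hs t ht
  have hker : ⁅(⟨s, hs⟩ : normalizer (H : Set G)), ⟨t, ht⟩⁆ ∈ H.normalizerMonoidHom.ker := by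
    rw [MonoidHom.mem_ker, map_commutatorElement, commutatorElement_eq_one_iff_commute]
    exact IsCyclic.commute_mulAut _ _
  rw [normalizerMonoidHom_ker, mem_subgroupOf] at hker
  exact hker

theorem commutator_le_centralizer_closure_of_le_normalizer {S : Set G} {T : Subgroup G}
    (hT : ∀ z ∈ S, T ≤ normalizer (closure {z} : Set G)) :
    ⁅T, T⁆ ≤ centralizer (closure S : Set G) := by
  rw [centralizer_closure]
  intro g hg
  rw [mem_centralizer_iff]
  intro z hz
  have hTz := hT z hz
  rw [← zpowers_eq_closure] at hTz
  have := commutator_normalizer_le_centralizer (zpowers z) (commutator_mono hTz hTz hg)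
  exact mem_centralizer_iff.mp this z (mem_zpowers z)

end Subgroup

theorem intersection_of_normalizers_metabelian_general
    (G : Type) [Group G]
    (T : Subgroup G)
    (hT : T = ⨅ z ∈ {g : G | ∃ x y : G, g = ⁅x, y⁆}, Subgroup.normalizer ((Subgroup.closure {z} : Subgroup G) : Set G)) :
    ⁅T, T⁆ ≤ Subgroup.centralizer (commutator G : Set G) ∧
    ∀ a ∈ ⁅T, T⁆, ∀ b ∈ ⁅T, T⁆, a * b = b * a := by
  have hT_le : ∀ z ∈ commutatorSet G, T ≤ normalizer (closure {z} : Set G) := by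
    rintro z ⟨x, y, rfl⟩
    exact hT ▸ iInf₂_le _ ⟨x, y, rfl⟩
  have hcent : ⁅T, T⁆ ≤ centralizer (commutator G : Set G) :=
    commutator_eq_closure G ▸ commutator_le_centralizer_closure_of_le_normalizer hT_le
  exact ⟨hcent, fun a ha b hb =>
    mem_centralizer_iff.mp (hcent hb) a (commutator_mono le_top le_top ha)⟩

/-- Let `G` be a finite group possessing `m` cyclic subgroups whose union contains all
commutators of `G`, and let `T` be the intersection of the normalizers `N_G(⟨z⟩)` over all
commutators `z` of `G`. Then `T' = [T,T]` centralizes `G'`; in particular `T` is metabelian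
(`[T,T]` is abelian). -/
theorem intersection_of_normalizers_metabelian
    (m : ℕ) (G : Type) [Group G] [Finite G]
    (hcov : ∃ C : Fin m → Subgroup G, (∀ i, IsCyclic ↥(C i)) ∧
      ∀ x y : G, ⁅x, y⁆ ∈ ⋃ i, ((C i : Subgroup G) : Set G))
    (T : Subgroup G)
    (hT : T = ⨅ z ∈ {g : G | ∃ x y : G, g = ⁅x, y⁆}, Subgroup.normalizer ((Subgroup.closure {z} : Subgroup G) : Set G)) :
    ⁅T, T⁆ ≤ Subgroup.centralizer (commutator G : Set G) ∧
    ∀ a ∈ ⁅T, T⁆, ∀ b ∈ ⁅T, T⁆, a * b = b * a :=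
  intersection_of_normalizers_metabelian_general G T hT
end

section
/- There exists a profinite group G such that the set of all commutators of G is contained in the union of 3 procyclic subgroups, yet the derived subgroup G' is infinite and not procyclic. (For instance, one may take G = A × B where A is a finite group with A' noncyclic of order four and B is a pro-p group, p an odd prime, with B' infinite procyclic.) -/
/-- A subgroup of a topological group is procyclic if it is closed and is the
topological closure of a subgroup generated by a single element. -/
def IsProcyclicSubgroup {G : Type*} [Group G] [TopologicalSpace G] [IsTopologicalGroup G]
    (H : Subgroup G) : Prop :=
  IsClosed (H : Set G) ∧ ∃ x : G, H = (Subgroup.closure {x}).topologicalClosure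

open scoped commutatorElement

/-!
Take `G = A × (ℤ₃ ⋊ ℤˣ)` with `A = D₄ × D₄`. The commutators of `A` are `1` and the three
involutions `t i` of `A' = Z(D₄) × Z(D₄)`, and all commutators of the second factor lie in `ℤ₃`.
Since `2` is a unit of `ℤ₃`, the closed subgroup generated by `(t i, 1)` contains
`(t i, 1) ^ 2 = (1, 2)`, hence `1 × ℤ₃`, hence `⟨t i⟩ × ℤ₃`; so three procyclic subgroups cover
the commutators. The commutators `(1, 2m)` of `(1, m)` with the reflection show that the closed
derived subgroup contains `1 × ℤ₃`, so it is infinite; but its image in the discrete group `A` is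
the noncyclic `A'`, while a procyclic subgroup has cyclic image there.
-/

open Multiplicative

namespace PadicInt
variable {p : ℕ} [Fact p.Prime]

lemma isUnit_two (hp : p ≠ 2) : IsUnit (2 : ℤ_[p]) := by
  rw [isUnit_iff, ← Nat.cast_ofNat, norm_natCast_eq_one_iff]
  exact (Nat.coprime_primes Fact.out Nat.prime_two).mpr hp

lemma denseRange_mul_natCast {u : ℤ_[p]} (hu : IsUnit u) : DenseRange fun n : ℕ => u * n :=
  hu.unit.mulLeft_bijective.surjective.denseRange.comp denseRange_natCast
    (continuous_const_mul u)

lemma map_mem_of_isUnit {G : Type*} [Group G] [TopologicalSpace G]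
    {φ : Multiplicative ℤ_[p] →* G} (hφ : Continuous φ) {H : Subgroup G}
    (hH : IsClosed (H : Set G)) {u : ℤ_[p]} (hu : IsUnit u) (huH : φ (ofAdd u) ∈ H)
    (z : ℤ_[p]) : φ (ofAdd z) ∈ H := by
  have hclosed : IsClosed {w : ℤ_[p] | φ (ofAdd w) ∈ H} := hH.preimage (hφ.comp continuous_ofAdd)
  refine (denseRange_mul_natCast hu).induction_on z hclosed fun n => ?_
  simpa [mul_comm u, ← nsmul_eq_mul, ofAdd_nsmul] using pow_mem huH n

lemma map_mem_of_map_one_sq_mem (hp : p ≠ 2) {G : Type*} [Group G] [TopologicalSpace G]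
    {φ : Multiplicative ℤ_[p] →* G} (hφ : Continuous φ) {H : Subgroup G}
    (hH : IsClosed (H : Set G)) (h : φ (ofAdd 1) ^ 2 ∈ H) (z : ℤ_[p]) : φ (ofAdd z) ∈ H := by
  refine map_mem_of_isUnit hφ hH (isUnit_two hp) ?_ z
  rwa [← one_add_one_eq_two, ofAdd_add, map_mul, ← pow_two]

end PadicInt

/-- The generalized dihedral group `M ⋊ ℤˣ`, where `-1` acts on `M` by negation. -/
def GeneralizedDihedral (M : Type*) : Type _ := M × ℤˣ

namespace GeneralizedDihedral

variable {M : Type*} [AddCommGroup M]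

instance : Group (GeneralizedDihedral M) where
  mul x y := (x.1 + x.2 • y.1, x.2 * y.2)
  one := (0, 1)
  inv x := (-(x.2⁻¹ • x.1), x.2⁻¹)
  mul_assoc := by
    rintro ⟨a, u⟩ ⟨b, v⟩ ⟨c, w⟩
    show (a + u • b + (u * v) • c, u * v * w) = (a + u • (b + v • c), u * (v * w))
    rw [smul_add, mul_smul, add_assoc, mul_assoc]
  one_mul := by
    rintro ⟨a, u⟩
    show ((0 : M) + (1 : ℤˣ) • a, 1 * u) = (a, u)
    rw [zero_add, one_smul, one_mul]
  mul_one := by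
    rintro ⟨a, u⟩
    show (a + u • (0 : M), u * 1) = (a, u)
    rw [smul_zero, add_zero, mul_one]
  inv_mul_cancel := by
    rintro ⟨a, u⟩
    show (-(u⁻¹ • a) + u⁻¹ • a, u⁻¹ * u) = ((0 : M), (1 : ℤˣ))
    rw [neg_add_cancel, inv_mul_cancel]

@[simp] lemma fst_mul (x y : GeneralizedDihedral M) : (x * y).1 = x.1 + x.2 • y.1 := rfl
@[simp] lemma snd_mul (x y : GeneralizedDihedral M) : (x * y).2 = x.2 * y.2 := rfl
@[simp] lemma fst_inv (x : GeneralizedDihedral M) : x⁻¹.1 = -(x.2⁻¹ • x.1) := rfl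
@[simp] lemma snd_inv (x : GeneralizedDihedral M) : x⁻¹.2 = x.2⁻¹ := rfl

def inl : Multiplicative M →* GeneralizedDihedral M where
  toFun m := (m.toAdd, 1)
  map_one' := rfl
  map_mul' m n := by
    show (m.toAdd + n.toAdd, (1 : ℤˣ)) = (m.toAdd + (1 : ℤˣ) • n.toAdd, 1 * 1)
    rw [one_smul, one_mul]

@[simp] lemma fst_inl (m : Multiplicative M) : (inl m).1 = m.toAdd := rfl
@[simp] lemma snd_inl (m : Multiplicative M) : (inl m).2 = 1 := rfl

lemma inl_injective : Function.Injective (inl : Multiplicative M →* GeneralizedDihedral M) :=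
  fun _ _ h => congrArg Prod.fst h

def reflection : GeneralizedDihedral M := ((0 : M), (-1 : ℤˣ))

@[simp] lemma fst_reflection : (reflection : GeneralizedDihedral M).1 = 0 := rfl
@[simp] lemma snd_reflection : (reflection : GeneralizedDihedral M).2 = -1 := rfl

lemma commutator_mem_range_inl (x y : GeneralizedDihedral M) :
    ⁅x, y⁆ ∈ (inl (M := M)).range := by
  refine ⟨ofAdd ⁅x, y⁆.1, Prod.ext rfl ?_⟩
  simp [commutatorElement_def, mul_right_comm x.2]

lemma commutator_inl_reflection (m : Multiplicative M) : ⁅inl m, reflection⁆ = inl m ^ 2 := by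
  rw [commutatorElement_def]
  refine Prod.ext ?_ ?_ <;> simp [pow_two]

variable [TopologicalSpace M]

instance : TopologicalSpace (GeneralizedDihedral M) :=
  inferInstanceAs (TopologicalSpace (M × ℤˣ))

instance [IsTopologicalAddGroup M] : IsTopologicalGroup (GeneralizedDihedral M) where
  continuous_mul := (continuous_fst.fst.add (continuous_fst.snd.smul continuous_snd.fst)).prodMk
    (continuous_fst.snd.mul continuous_snd.snd)
  continuous_inv := (continuous_snd.inv.smul continuous_fst).neg.prodMk continuous_snd.inv

instance [CompactSpace M] : CompactSpace (GeneralizedDihedral M) :=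
  inferInstanceAs (CompactSpace (M × ℤˣ))
instance [T2Space M] : T2Space (GeneralizedDihedral M) := inferInstanceAs (T2Space (M × ℤˣ))
instance [TotallyDisconnectedSpace M] : TotallyDisconnectedSpace (GeneralizedDihedral M) :=
  inferInstanceAs (TotallyDisconnectedSpace (M × ℤˣ))

lemma continuous_inl : Continuous (inl : Multiplicative M →* GeneralizedDihedral M) :=
  continuous_toAdd.prodMk continuous_const

end GeneralizedDihedral

lemma mem_zpowers_iff_mem_image_range_of_pow_eq_one {G : Type*} [Group G] [Finite G]
    [DecidableEq G] {x y : G} {n : ℕ} (hn : 0 < n) (hx : x ^ n = 1) :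
    y ∈ Subgroup.zpowers x ↔ y ∈ (Finset.range n).image (x ^ ·) := by
  rw [← mem_powers_iff_mem_zpowers]
  exact Finset.mem_range_iff_mem_finset_range_of_mod_eq' hn fun m => (pow_eq_pow_mod m hx).symm

lemma Prod.fst_mem_zpowers_of_mem_topologicalClosure {A P : Type*} [Group A] [TopologicalSpace A]
    [DiscreteTopology A] [Group P] [TopologicalSpace P] [IsTopologicalGroup P]
    {x y : A × P} (hy : y ∈ (Subgroup.closure {x}).topologicalClosure) :
    y.1 ∈ Subgroup.zpowers x.1 := by
  have hK : IsClosed ((Subgroup.zpowers x.1).comap (MonoidHom.fst A P) : Set (A × P)) :=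
    (isClosed_discrete (Subgroup.zpowers x.1 : Set A)).preimage continuous_fst
  refine Subgroup.topologicalClosure_minimal _ ?_ hK hy
  simp [Subgroup.closure_le]

lemma Prod.mk_pow_mem_topologicalClosure_closure_singleton {A P : Type*} [Group A]
    [TopologicalSpace A] [IsTopologicalGroup A] [Group P] [TopologicalSpace P]
    [IsTopologicalGroup P] {p : ℕ} [Fact p.Prime] (hp : p ≠ 2)
    {ι : Multiplicative ℤ_[p] →* P} (hι : Continuous ι) {a : A} (ha : a ^ 2 = 1) (k : ℕ)
    (z : ℤ_[p]) :
    (a ^ k, ι (ofAdd z)) ∈ (Subgroup.closure {(a, ι (ofAdd 1))}).topologicalClosure := by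
  set c : A × P := (a, ι (ofAdd 1))
  have hc : c ∈ (Subgroup.closure {c}).topologicalClosure :=
    Subgroup.le_topologicalClosure _ (Subgroup.subset_closure rfl)
  have hinr (w : ℤ_[p]) : (1, ι (ofAdd w)) ∈ (Subgroup.closure {c}).topologicalClosure := by
    refine PadicInt.map_mem_of_map_one_sq_mem hp (φ := (MonoidHom.inr A P).comp ι)
      (continuous_const.prodMk hι) (Subgroup.isClosed_topologicalClosure _) ?_ w
    simpa [c, ha] using pow_mem hc 2
  have hsplit : (a ^ k, ι (ofAdd z)) = c ^ k * (1, ι (ofAdd (z - k))) := by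
    ext
    · simp [c]
    · show ι (ofAdd z) = ι (ofAdd 1) ^ k * ι (ofAdd (z - k))
      rw [← map_pow, ← map_mul, ← ofAdd_nsmul, ← ofAdd_add, nsmul_one, add_sub_cancel]
  rw [hsplit]
  exact mul_mem (pow_mem hc k) (hinr _)

instance {n : ℕ} : TopologicalSpace (DihedralGroup n) := ⊥

instance {n : ℕ} : DiscreteTopology (DihedralGroup n) := ⟨rfl⟩

namespace CommutatorCover

open GeneralizedDihedral

abbrev A := DihedralGroup 4 × DihedralGroup 4

def t : Fin 3 → A := ![(.r 2, 1), (1, .r 2), (.r 2, .r 2)]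

lemma t_sq (i : Fin 3) : t i ^ 2 = 1 := by revert i; decide

set_option maxRecDepth 10000 in
lemma commutator_eq_one_or_eq_t (a b : A) : ⁅a, b⁆ = 1 ∨ ∃ i, ⁅a, b⁆ = t i := by
  revert a b; decide

lemma exists_commutator_eq_t (i : Fin 3) : ∃ a b : A, ⁅a, b⁆ = t i := by
  fin_cases i
  · exact ⟨(.r 1, 1), (.sr 0, 1), by decide⟩
  · exact ⟨(1, .r 1), (1, .sr 0), by decide⟩
  · exact ⟨(.r 1, .r 1), (.sr 0, .sr 0), by decide⟩

lemma not_t_zero_and_t_one_mem_zpowers (a : A) :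
    ¬ (t 0 ∈ Subgroup.zpowers a ∧ t 1 ∈ Subgroup.zpowers a) := by
  have ha : a ^ 4 = 1 := by revert a; decide
  rw [mem_zpowers_iff_mem_image_range_of_pow_eq_one (by norm_num) ha,
    mem_zpowers_iff_mem_image_range_of_pow_eq_one (by norm_num) ha]
  revert a; decide

abbrev G := A × GeneralizedDihedral ℤ_[3]

noncomputable def C (i : Fin 3) : Subgroup G :=
  (Subgroup.closure {(t i, inl (ofAdd 1))}).topologicalClosure

lemma commutator_mem_iUnion_C (x y : G) : ⁅x, y⁆ ∈ ⋃ i, (C i : Set G) := by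
  obtain ⟨m, hm⟩ := commutator_mem_range_inl x.2 y.2
  have hC (i : Fin 3) (k : ℕ) : (t i ^ k, inl m) ∈ C i :=
    Prod.mk_pow_mem_topologicalClosure_closure_singleton (by norm_num) continuous_inl (t_sq i) k
      m.toAdd
  have hxy : ⁅x, y⁆ = (⁅x.1, y.1⁆, inl m) := Prod.ext rfl hm.symm
  rw [Set.mem_iUnion, hxy]
  rcases commutator_eq_one_or_eq_t x.1 y.1 with h | ⟨i, h⟩
  · exact ⟨0, by simpa [h] using hC 0 0⟩
  · exact ⟨i, by simpa [h] using hC i 1⟩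

lemma inr_inl_mem_derived (z : ℤ_[3]) :
    ((1, inl (ofAdd z)) : G) ∈ (commutator G).topologicalClosure := by
  refine PadicInt.map_mem_of_map_one_sq_mem (by norm_num) (φ := (MonoidHom.inr A _).comp inl)
    (continuous_const.prodMk continuous_inl) (Subgroup.isClosed_topologicalClosure _) ?_ z
  have h : ⁅((1, inl (ofAdd 1)) : G), ((1, reflection) : G)⁆ = (1, inl (ofAdd 1)) ^ 2 :=
    Prod.ext (commutatorElement_one_left 1) (commutator_inl_reflection _)
  rw [MonoidHom.comp_apply, MonoidHom.inr_apply, ← h]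
  exact Subgroup.le_topologicalClosure _
    (Subgroup.commutator_mem_commutator (Subgroup.mem_top _) (Subgroup.mem_top _))

lemma infinite_derived : Infinite (commutator G).topologicalClosure :=
  Infinite.of_injective (fun z : ℤ_[3] => ⟨(1, inl (ofAdd z)), inr_inl_mem_derived z⟩)
    fun _ _ h => ofAdd.injective (inl_injective (congrArg (Prod.snd ∘ Subtype.val) h))

lemma not_isProcyclicSubgroup_derived :
    ¬ IsProcyclicSubgroup (commutator G).topologicalClosure := by
  rintro ⟨-, x, hx⟩
  have ht (i : Fin 3) : t i ∈ Subgroup.zpowers x.1 := by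
    obtain ⟨a, b, hab⟩ := exists_commutator_eq_t i
    have hcomm : ⁅((a, 1) : G), ((b, 1) : G)⁆ = (t i, 1) :=
      Prod.ext hab (commutatorElement_one_left 1)
    have hmem : ((t i, 1) : G) ∈ (Subgroup.closure {x}).topologicalClosure := by
      rw [← hx, ← hcomm]
      exact Subgroup.le_topologicalClosure _
        (Subgroup.commutator_mem_commutator (Subgroup.mem_top _) (Subgroup.mem_top _))
    exact Prod.fst_mem_zpowers_of_mem_topologicalClosure hmem
  exact not_t_zero_and_t_one_mem_zpowers x.1 ⟨ht 0, ht 1⟩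

end CommutatorCover

/-- There exists a profinite group `G` in which all commutators are contained in the union of
`3` procyclic subgroups, yet the derived (closed) subgroup `G'` is infinite and not
procyclic. -/
theorem exists_profinite_commutators_covered_derived_not_procyclic :
    ∃ (G : Type) (_ : Group G) (_ : TopologicalSpace G) (_ : IsTopologicalGroup G)
      (_ : CompactSpace G) (_ : T2Space G) (_ : TotallyDisconnectedSpace G),
      ∃ C : Fin 3 → Subgroup G, (∀ i, IsProcyclicSubgroup (C i)) ∧
        (∀ x y : G, ⁅x, y⁆ ∈ ⋃ i, ((C i : Subgroup G) : Set G)) ∧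
        Infinite ((commutator G).topologicalClosure) ∧
        ¬ IsProcyclicSubgroup ((commutator G).topologicalClosure) := by
  open CommutatorCover in
  exact ⟨G, inferInstance, inferInstance, inferInstance, inferInstance, inferInstance,
    inferInstance, C, fun i => ⟨Subgroup.isClosed_topologicalClosure _, _, rfl⟩,
    commutator_mem_iUnion_C, infinite_derived, not_isProcyclicSubgroup_derived⟩
end

section
/- For every positive integer k there exists a finite group G such that the set of all commutators of G is contained in the union of 3 cyclic subgroups, the commutator subgroup G' is not cyclic, and |G'| > k. (For instance, take G = A × B where A is a finite group with A' noncyclic of order four and B is a finite group with B' of odd prime order p > k/4.) -/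
open scoped commutatorElement

/-!
Take `G = (D₄ × D₄) × D_p` with `p > k` an odd prime. Every commutator of `D₄` is `1` or `r 2`,
so the commutators of `D₄ × D₄` lie in the Klein four-group `⟨r 2⟩ × ⟨r 2⟩`, whose three
involutions `v` are themselves commutators. Every commutator of `D_p` is a rotation, i.e. lies in
`⟨r 1⟩` of odd order `p`. As `2` and `p` are coprime, `⟨(v, r 1)⟩ = ⟨v⟩ × ⟨r 1⟩`, so these three
cyclic subgroups cover all commutators of `G`. Finally `G'` contains two distinct involutions
(a cyclic group has at most one), so is not cyclic, and the element `(1, r 2)` of order `p`.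
-/

open Subgroup DihedralGroup

theorem Prod.commutatorElement_eq_mk {A B : Type*} [Group A] [Group B] (x y : A × B) :
    ⁅x, y⁆ = (⁅x.1, y.1⁆, ⁅x.2, y.2⁆) :=
  Prod.ext (map_commutatorElement (MonoidHom.fst A B) x y)
    (map_commutatorElement (MonoidHom.snd A B) x y)

theorem commutatorElement_mem_commutator {G : Type*} [Group G] (x y : G) :
    ⁅x, y⁆ ∈ commutator G :=
  commutator_mem_commutator (mem_top x) (mem_top y)

theorem MonoidHom.map_mem_commutator {G H : Type*} [Group G] [Group H] (f : G →* H) {x : G}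
    (hx : x ∈ commutator G) : f x ∈ commutator H :=
  (map_commutator_eq G f).trans_le (commutator_mono le_top le_top) (mem_map_of_mem f hx)

theorem zpowers_mk_eq_prod_zpowers {A B : Type*} [Group A] [Group B] [Finite A] [Finite B]
    {a : A} {b : B} (h : (orderOf a).Coprime (orderOf b)) :
    zpowers (a, b) = (zpowers a).prod (zpowers b) := by
  refine eq_of_le_of_card_ge (zpowers_le.mpr ⟨mem_zpowers a, mem_zpowers b⟩) ?_
  rw [Nat.card_congr (prodEquiv _ _).toEquiv, Nat.card_prod, Nat.card_zpowers, Nat.card_zpowers,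
    Nat.card_zpowers, Prod.orderOf_mk, h.lcm_eq_mul]

theorem commutatorElement_mem_iUnion_zpowers_mk {A B ι : Type*} [Group A] [Group B] [Finite A]
    [Finite B] [Nonempty ι] (a : ι → A) (b : B)
    (ha : ∀ x y : A, ⁅x, y⁆ = 1 ∨ ∃ i, ⁅x, y⁆ = a i) (hb : ∀ x y : B, ⁅x, y⁆ ∈ zpowers b)
    (hcop : ∀ i, (orderOf (a i)).Coprime (orderOf b)) (x y : A × B) :
    ⁅x, y⁆ ∈ ⋃ i, (zpowers (a i, b) : Set (A × B)) := by
  obtain ⟨i, hi⟩ : ∃ i, ⁅x.1, y.1⁆ ∈ zpowers (a i) := by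
    rcases ha x.1 y.1 with h | ⟨i, h⟩
    · exact ⟨Classical.arbitrary ι, h ▸ one_mem _⟩
    · exact ⟨i, h ▸ mem_zpowers _⟩
  refine Set.mem_iUnion.mpr ⟨i, ?_⟩
  rw [SetLike.mem_coe, zpowers_mk_eq_prod_zpowers (hcop i), mem_prod,
    Prod.commutatorElement_eq_mk]
  exact ⟨hi, hb _ _⟩

theorem not_isCyclic_of_sq_eq_one {H : Type*} [Group H] [Finite H] {x y : H}
    (hx : x ^ 2 = 1) (hy : y ^ 2 = 1) (hx1 : x ≠ 1) (hy1 : y ≠ 1) (hxy : x ≠ y) :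
    ¬ IsCyclic H := by
  intro _
  classical
  have : Fintype H := Fintype.ofFinite H
  have hsub : ({1, x, y} : Finset H) ⊆ ({a : H | a ^ 2 = 1} : Finset H) := by
    intro a ha
    simp only [Finset.mem_insert, Finset.mem_singleton] at ha
    rcases ha with rfl | rfl | rfl <;> simp [*]
  have := (Finset.card_le_card hsub).trans (IsCyclic.card_pow_eq_one_le two_pos)
  rw [Finset.card_insert_of_notMem (by simp [hx1.symm, hy1.symm]), Finset.card_pair hxy] at this
  omega

theorem Subgroup.not_isCyclic_of_sq_eq_one {H : Type*} [Group H] [Finite H] (K : Subgroup H)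
    {x y : H} (hxK : x ∈ K) (hyK : y ∈ K) (hx : x ^ 2 = 1) (hy : y ^ 2 = 1) (hx1 : x ≠ 1)
    (hy1 : y ≠ 1) (hxy : x ≠ y) : ¬ IsCyclic K :=
  _root_.not_isCyclic_of_sq_eq_one (x := ⟨x, hxK⟩) (y := ⟨y, hyK⟩) (Subtype.ext hx)
    (Subtype.ext hy) (by simpa [Subtype.ext_iff]) (by simpa [Subtype.ext_iff])
    (by simpa [Subtype.ext_iff])

namespace DihedralGroup

theorem r_mem_zpowers_r_one {n : ℕ} (i : ZMod n) : r i ∈ zpowers (r 1) :=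
  ⟨(i.cast : ℤ), by simp only [r_one_zpow, ZMod.intCast_zmod_cast]⟩

theorem commutatorElement_mem_zpowers_r_one {n : ℕ} (x y : DihedralGroup n) :
    ⁅x, y⁆ ∈ zpowers (r 1) := by
  rcases x with i | i <;> rcases y with j | j <;>
    simp only [commutatorElement_def, inv_r, inv_sr, r_mul_r, r_mul_sr, sr_mul_r, sr_mul_sr,
      r_mem_zpowers_r_one]

theorem commutatorElement_r_one_sr_zero {n : ℕ} :
    ⁅(r 1 : DihedralGroup n), (sr 0 : DihedralGroup n)⁆ = r 2 := by
  simp only [commutatorElement_def, inv_r, inv_sr, r_mul_sr, sr_mul_r, sr_mul_sr]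
  congr 1
  ring

theorem orderOf_r_two {n : ℕ} (hn : Odd n) : orderOf (r 2 : DihedralGroup n) = n := by
  rw [show (r 2 : DihedralGroup n) = r 1 ^ 2 by rw [r_one_pow, Nat.cast_ofNat],
    Nat.Coprime.orderOf_pow, orderOf_r_one]
  rwa [orderOf_r_one, Nat.coprime_two_right]

theorem commutatorElement_eq_one_or_eq_r_two (x y : DihedralGroup 4) :
    ⁅x, y⁆ = 1 ∨ ⁅x, y⁆ = r 2 := by
  revert x y
  decide

end DihedralGroup

def kleinInvolutions : Fin 3 → DihedralGroup 4 × DihedralGroup 4 :=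
  ![(r 2, 1), (1, r 2), (r 2, r 2)]

theorem sq_kleinInvolutions (i : Fin 3) : kleinInvolutions i ^ 2 = 1 := by
  fin_cases i <;> decide

theorem commutatorElement_eq_one_or_eq_kleinInvolutions
    (x y : DihedralGroup 4 × DihedralGroup 4) :
    ⁅x, y⁆ = 1 ∨ ∃ i, ⁅x, y⁆ = kleinInvolutions i := by
  rw [Prod.commutatorElement_eq_mk]
  rcases commutatorElement_eq_one_or_eq_r_two x.1 y.1 with h₁ | h₁ <;>
    rcases commutatorElement_eq_one_or_eq_r_two x.2 y.2 with h₂ | h₂ <;> rw [h₁, h₂]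
  · exact Or.inl rfl
  · exact Or.inr ⟨1, rfl⟩
  · exact Or.inr ⟨0, rfl⟩
  · exact Or.inr ⟨2, rfl⟩

theorem kleinInvolutions_mem_commutator (i : Fin 3) :
    kleinInvolutions i ∈ commutator (DihedralGroup 4 × DihedralGroup 4) := by
  obtain ⟨x, y, h⟩ :
      ∃ x y : DihedralGroup 4 × DihedralGroup 4, ⁅x, y⁆ = kleinInvolutions i := by
    fin_cases i
    exacts [⟨(r 1, 1), (sr 0, 1), by decide⟩, ⟨(1, r 1), (1, sr 0), by decide⟩,
      ⟨(r 1, r 1), (sr 0, sr 0), by decide⟩]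
  exact h ▸ commutatorElement_mem_commutator x y

theorem not_isCyclic_commutator_dihedralGroup_four_sq_prod (B : Type*) [Group B] [Finite B] :
    ¬ IsCyclic (commutator ((DihedralGroup 4 × DihedralGroup 4) × B)) := by
  have hmem i := (MonoidHom.inl _ B).map_mem_commutator (kleinInvolutions_mem_commutator i)
  refine (commutator _).not_isCyclic_of_sq_eq_one (hmem 0) (hmem 1)
    (Prod.ext (sq_kleinInvolutions 0) (one_pow 2)) (Prod.ext (sq_kleinInvolutions 1) (one_pow 2))
    ?_ ?_ ?_ <;> refine fun h => absurd (congrArg Prod.fst h) ?_ <;>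
    simp only [MonoidHom.inl_apply, Prod.fst_one] <;> decide

theorem exists_finite_commutators_covered_derived_noncyclic_large_general
    (k : ℕ) :
    ∃ (G : Type) (_ : Group G) (_ : Finite G),
      ∃ C : Fin 3 → Subgroup G, (∀ i, IsCyclic ↥(C i)) ∧
        (∀ x y : G, ⁅x, y⁆ ∈ ⋃ i, ((C i : Subgroup G) : Set G)) ∧
        ¬ IsCyclic ↥(commutator G) ∧ k < Nat.card ↥(commutator G) := by
  obtain ⟨p, hkp, hp⟩ := Nat.exists_infinite_primes (k + 3)
  have hodd : Odd p := hp.odd_of_ne_two (by omega)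
  have : NeZero p := ⟨hp.ne_zero⟩
  refine ⟨(DihedralGroup 4 × DihedralGroup 4) × DihedralGroup p, inferInstance, inferInstance,
    fun i => zpowers (kleinInvolutions i, r 1), fun i => inferInstance, ?_,
    not_isCyclic_commutator_dihedralGroup_four_sq_prod _, ?_⟩
  · refine commutatorElement_mem_iUnion_zpowers_mk _ _
      commutatorElement_eq_one_or_eq_kleinInvolutions commutatorElement_mem_zpowers_r_one
      fun i => ?_
    rw [orderOf_r_one]
    exact (Nat.coprime_two_left.mpr hodd).coprime_dvd_left
      (orderOf_dvd_of_pow_eq_one (sq_kleinInvolutions i))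
  · have hmem := (MonoidHom.inr (DihedralGroup 4 × DihedralGroup 4) _).map_mem_commutator
      (commutatorElement_r_one_sr_zero (n := p) ▸ commutatorElement_mem_commutator _ _)
    calc k < p := by omega
      _ = orderOf ((1 : DihedralGroup 4 × DihedralGroup 4), (r 2 : DihedralGroup p)) := by
        rw [Prod.orderOf_mk, orderOf_one, Nat.lcm_one_left, orderOf_r_two hodd]
      _ ≤ Nat.card (commutator _) := Subgroup.orderOf_le_card _ (Set.toFinite _) hmem

/-- For every positive integer `k` there is a finite group `G` whose commutators are contained
in the union of `3` cyclic subgroups, with `G'` noncyclic and `|G'| > k`. -/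
theorem exists_finite_commutators_covered_derived_noncyclic_large
    (k : ℕ) (hk : 0 < k) :
    ∃ (G : Type) (_ : Group G) (_ : Finite G),
      ∃ C : Fin 3 → Subgroup G, (∀ i, IsCyclic ↥(C i)) ∧
        (∀ x y : G, ⁅x, y⁆ ∈ ⋃ i, ((C i : Subgroup G) : Set G)) ∧
        ¬ IsCyclic ↥(commutator G) ∧ k < Nat.card ↥(commutator G) :=
  exists_finite_commutators_covered_derived_noncyclic_large_general k
end
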